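/- arXiv:2406.01305 — 3 statements merged into one kernel-verified Lean document; each statement's English description precedes it below -/
import Mathlib

section
/- Let G be a finite group of order pq, where p and q are distinct primes. Then Γ_CCC(G), Γ_NCC(G) and Γ_SCC(G) are all cographs. -/
/-- The set of conjugacy classes of non-central elements of `G`. -/
def NCClass (G : Type*) [Group G] : Type _ :=
  {c : ConjClasses G // ∃ x : G, ConjClasses.mk x = c ∧ x ∉ Subgroup.center G}

/-- The conjugacy class graph associated to a property `P` of subgroups:
two distinct non-central conjugacy classes are adjacent iff they have
representatives `a`, `b` with `P ⟨a, b⟩`. -/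
def classGraph (G : Type*) [Group G] (P : Subgroup G → Prop) :
    SimpleGraph (NCClass G) where
  Adj c d := c ≠ d ∧ ∃ a b : G, ConjClasses.mk a = c.1 ∧ ConjClasses.mk b = d.1 ∧
    P (Subgroup.closure {a, b})
  symm := by
    constructor
    rintro c d ⟨hne, a, b, ha, hb, hP⟩
    refine ⟨hne.symm, b, a, hb, ha, ?_⟩
    rwa [Set.pair_comm]
  loopless := by constructor; rintro c ⟨hne, -⟩; exact hne rfl

/-- The commuting conjugacy class graph `Γ_CCC(G)`. -/
def cccGraph (G : Type*) [Group G] : SimpleGraph (NCClass G) :=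
  classGraph G (fun H => ∀ x ∈ H, ∀ y ∈ H, x * y = y * x)

/-- The nilpotent conjugacy class graph `Γ_NCC(G)`. -/
def nccGraph (G : Type*) [Group G] : SimpleGraph (NCClass G) :=
  classGraph G (fun H => Group.IsNilpotent H)

/-- The solvable conjugacy class graph `Γ_SCC(G)`. -/
def sccGraph (G : Type*) [Group G] : SimpleGraph (NCClass G) :=
  classGraph G (fun H => IsSolvable H)

/-- A graph contains an induced path `P₄` on four vertices. -/
def HasInducedP4 {V : Type*} (Γ : SimpleGraph V) : Prop :=
  ∃ a b c d : V, a ≠ b ∧ a ≠ c ∧ a ≠ d ∧ b ≠ c ∧ b ≠ d ∧ c ≠ d ∧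
    Γ.Adj a b ∧ Γ.Adj b c ∧ Γ.Adj c d ∧ ¬Γ.Adj a c ∧ ¬Γ.Adj a d ∧ ¬Γ.Adj b d

/-- A graph is a cograph iff it has no induced `P₄`. -/
def IsCograph {V : Type*} (Γ : SimpleGraph V) : Prop := ¬ HasInducedP4 Γ

/-- A graph contains an induced cycle `Cₙ`. -/
def HasInducedCycle {V : Type*} (Γ : SimpleGraph V) (n : ℕ) : Prop :=
  ∃ f : ZMod n → V, Function.Injective f ∧
    ∀ i j : ZMod n, Γ.Adj (f i) (f j) ↔ (j = i + 1 ∨ i = j + 1)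

/-- A graph is chordal iff it has no induced cycle `Cₙ` for `n ≥ 4`. -/
def IsChordal {V : Type*} (Γ : SimpleGraph V) : Prop :=
  ∀ n : ℕ, 4 ≤ n → ¬ HasInducedCycle Γ n

/-- A graph contains an induced `2K₂`. -/
def Has2K2 {V : Type*} (Γ : SimpleGraph V) : Prop :=
  ∃ a b c d : V, a ≠ b ∧ a ≠ c ∧ a ≠ d ∧ b ≠ c ∧ b ≠ d ∧ c ≠ d ∧
    Γ.Adj a b ∧ Γ.Adj c d ∧ ¬Γ.Adj a c ∧ ¬Γ.Adj a d ∧ ¬Γ.Adj b c ∧ ¬Γ.Adj b d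

/-- A graph contains an induced claw `K_{1,3}`: a vertex with three pairwise
non-adjacent neighbours. -/
def HasClaw {V : Type*} (Γ : SimpleGraph V) : Prop :=
  ∃ v a b c : V, a ≠ b ∧ a ≠ c ∧ b ≠ c ∧
    Γ.Adj v a ∧ Γ.Adj v b ∧ Γ.Adj v c ∧ ¬Γ.Adj a b ∧ ¬Γ.Adj a c ∧ ¬Γ.Adj b c

/-- A graph is claw-free iff it has no induced `K_{1,3}`. -/
def IsClawFree {V : Type*} (Γ : SimpleGraph V) : Prop := ¬ HasClaw Γ

/-- A graph is split iff it has no induced `C₄`, `C₅` or `2K₂`. -/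
def IsSplit {V : Type*} (Γ : SimpleGraph V) : Prop :=
  ¬ HasInducedCycle Γ 4 ∧ ¬ HasInducedCycle Γ 5 ∧ ¬ Has2K2 Γ

/-- A graph is threshold iff it has no induced `P₄`, `C₄`, `C₅` or `2K₂`. -/
def IsThreshold {V : Type*} (Γ : SimpleGraph V) : Prop :=
  ¬ HasInducedP4 Γ ∧ ¬ HasInducedCycle Γ 4 ∧ ¬ HasInducedCycle Γ 5 ∧ ¬ Has2K2 Γ

/-- An EPPO group: every non-identity element has prime power order. -/
def IsEPPO (G : Type*) [Group G] : Prop :=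
  ∀ g : G, g ≠ 1 → IsPrimePow (orderOf g)

/-!
A proper subgroup of a group of order `pq` has order `1`, `p` or `q`, hence is cyclic. So the
centralizer of every non-central element is abelian, and commuting is transitive on non-central
elements; conjugating one commuting pair of representatives onto the other then makes adjacency
in `Γ_CCC` transitive, which excludes an induced `P₄`. As `pq` is squarefree, every Sylow subgroup
of `G` is cyclic: such groups are solvable, so `Γ_SCC` is complete, and their nilpotent subgroups
are cyclic, so `Γ_NCC = Γ_CCC`.
-/

open Subgroup

theorem IsCograph.of_adj_trans {V : Type*} {Γ : SimpleGraph V}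
    (h : ∀ a b c : V, Γ.Adj a b → Γ.Adj b c → a ≠ c → Γ.Adj a c) : IsCograph Γ :=
  fun ⟨a, b, c, _, _, hac, _, _, _, _, hab, hbc, _, hnac, _, _⟩ => hnac (h a b c hab hbc hac)

theorem isCograph_top {V : Type*} : IsCograph (⊤ : SimpleGraph V) :=
  .of_adj_trans fun _ _ _ _ _ => id

theorem Nat.dvd_or_dvd_of_dvd_mul_of_ne {p q d : ℕ} (hp : p.Prime) (hq : q.Prime)
    (hd : d ∣ p * q) (hne : d ≠ p * q) : d ∣ p ∨ d ∣ q := by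
  obtain ⟨a, b, ha, hb, rfl⟩ := Nat.dvd_mul.mp hd
  rcases (Nat.dvd_prime hp).mp ha with rfl | rfl
  · exact .inr (by simpa using hb)
  · rcases (Nat.dvd_prime hq).mp hb with rfl | rfl
    · exact .inl (by simp)
    · exact absurd rfl hne

section ConjClassGraphs

variable {G : Type*} [Group G]

theorem NCClass.notMem_center {c : NCClass G} {a : G} (ha : ConjClasses.mk a = c.1) :
    a ∉ center G := by
  obtain ⟨x, hx, hxc⟩ := c.2
  intro hac
  have : IsConj x a := ConjClasses.mk_eq_mk_iff_isConj.mp (hx.trans ha.symm)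
  exact hxc (this.eq_of_right_mem_center hac ▸ hac)

theorem closure_pair_commutative_iff {a b : G} :
    (∀ x ∈ closure {a, b}, ∀ y ∈ closure {a, b}, x * y = y * x) ↔ Commute a b := by
  refine ⟨fun h => h a (subset_closure (by simp)) b (subset_closure (by simp)), fun h => ?_⟩
  have := isMulCommutative_closure (k := {a, b}) (by
    rintro x (rfl | rfl) y (rfl | rfl) <;> first | rfl | exact h.eq | exact h.eq.symm)
  exact isMulCommutative_iff_of_setLike.mp this

theorem cccGraph_isCograph (hG : ∀ g ∉ center G, IsMulCommutative (centralizer {g})) :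
    IsCograph (cccGraph G) := by
  refine .of_adj_trans fun c d e ⟨_, a, b, ha, hb, hab⟩ ⟨_, b', f, hb', hf, hb'f⟩ hce => ?_
  replace hab := closure_pair_commutative_iff.mp hab
  replace hb'f := closure_pair_commutative_iff.mp hb'f
  -- conjugate the first edge so that both edges share the representative `b'` of `d`
  obtain ⟨g, rfl⟩ := isConj_iff.mp (ConjClasses.mk_eq_mk_iff_isConj.mp (hb.trans hb'.symm))
  have hga : ConjClasses.mk (g * a * g⁻¹) = c.1 :=
    ha ▸ ConjClasses.mk_eq_mk_iff_isConj.mpr (isConj_iff.mpr ⟨g, rfl⟩).symm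
  have := hG _ (NCClass.notMem_center hb')
  have hga_mem : g * a * g⁻¹ ∈ centralizer {g * b * g⁻¹} :=
    mem_centralizer_singleton_iff.mpr (hab.map (MulAut.conj g)).eq
  have hf_mem : f ∈ centralizer {g * b * g⁻¹} := mem_centralizer_singleton_iff.mpr hb'f.eq.symm
  exact ⟨hce, g * a * g⁻¹, f, hga, hf,
    closure_pair_commutative_iff.mpr (setLike_mul_comm hga_mem hf_mem)⟩

theorem sccGraph_eq_top [Group.IsSolvable G] : sccGraph G = ⊤ := by
  ext c d
  obtain ⟨a, ha⟩ := c.1.exists_rep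
  obtain ⟨b, hb⟩ := d.1.exists_rep
  exact ⟨And.left, fun hcd => ⟨hcd, a, b, ha, hb, (inferInstance : Group.IsSolvable _)⟩⟩

theorem IsZGroup.isNilpotent_iff_isMulCommutative [Finite G] [IsZGroup G] :
    Group.IsNilpotent G ↔ IsMulCommutative G :=
  ⟨fun _ => inferInstance, fun h => ⟨⟨1, upperCentralSeries_one_eq_top_iff.mpr h⟩⟩⟩

theorem nccGraph_eq_cccGraph [Finite G] [IsZGroup G] : nccGraph G = cccGraph G := by
  unfold nccGraph cccGraph
  congr
  ext H
  rw [IsZGroup.isNilpotent_iff_isMulCommutative, isMulCommutative_iff_of_setLike]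

end ConjClassGraphs

section OrderPQ

variable {G : Type*} [Group G] {p q : ℕ}

theorem Subgroup.isMulCommutative_of_ne_top [Finite G] (hp : p.Prime) (hq : q.Prime)
    (hcard : Nat.card G = p * q) {H : Subgroup G} (hH : H ≠ ⊤) : IsMulCommutative H := by
  have hdvd := hcard ▸ H.card_subgroup_dvd_card
  have hne : Nat.card H ≠ p * q := hcard ▸ mt H.card_eq_iff_eq_top.mp hH
  have : IsCyclic H := by
    rcases Nat.dvd_or_dvd_of_dvd_mul_of_ne hp hq hdvd hne with h | h
    · have := Fact.mk hp; exact isCyclic_of_card_dvd_prime h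
    · have := Fact.mk hq; exact isCyclic_of_card_dvd_prime h
  infer_instance

theorem isZGroup_of_card_eq_mul (hp : p.Prime) (hq : q.Prime) (hpq : p ≠ q)
    (hcard : Nat.card G = p * q) : IsZGroup G :=
  .of_squarefree <| hcard ▸ (Nat.squarefree_mul ((Nat.coprime_primes hp hq).mpr hpq)).mpr
    ⟨hp.prime.squarefree, hq.prime.squarefree⟩

end OrderPQ

theorem pq_group_cograph (G : Type*) [Group G] [Finite G] (p q : ℕ)
    (hp : p.Prime) (hq : q.Prime) (hpq : p ≠ q) (hcard : Nat.card G = p * q) :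
    IsCograph (cccGraph G) ∧ IsCograph (nccGraph G) ∧ IsCograph (sccGraph G) := by
  have hct : IsCograph (cccGraph G) := cccGraph_isCograph fun g hg =>
    isMulCommutative_of_ne_top hp hq hcard
      (mt centralizer_eq_top_iff_subset.mp (hg ∘ Set.singleton_subset_iff.mp))
  have := isZGroup_of_card_eq_mul hp hq hpq hcard
  exact ⟨hct, nccGraph_eq_cccGraph (G := G) ▸ hct, sccGraph_eq_top (G := G) ▸ isCograph_top⟩
end

section
/- Let G be a finite nilpotent group whose order is divisible by at least two distinct primes. Then Γ_CCC(G) is 2K_2-free if and only if G is abelian. -/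
/-!
Suppose `G` is not abelian. Writing a non-central element as the product of its `q`-part and its
`q'`-part, one factor is non-central and has order prime to `p` or to `q`; so there are a prime
`q ∣ |G|` and a non-central `a` of order prime to `q`. Jordan's lemma gives `b₀` no conjugate of
which lies in the proper subgroup `C_G(a)`, and this survives replacing `b₀` by its `q'`-part `b`,
because in a nilpotent group elements of coprime orders commute. For `z` of order `q`, which
therefore commutes with `a` and `b`, the classes of `a, az, b, bz` induce a `2K₂`: `a` and `b` are
powers of `az` and `bz`, so no conjugates across the two pairs commute, while `az` and `bz` are
not conjugate to `a` and `b` because their orders are larger.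
-/

theorem has2K2_of_adj {V : Type*} {Γ : SimpleGraph V} {a b c d : V} (hab : Γ.Adj a b)
    (hcd : Γ.Adj c d) (hac : ¬Γ.Adj a c) (had : ¬Γ.Adj a d) (hbc : ¬Γ.Adj b c)
    (hbd : ¬Γ.Adj b d) : Has2K2 Γ :=
  ⟨a, b, c, d, hab.ne, by rintro rfl; exact hbc hab.symm, by rintro rfl; exact hac hcd.symm,
    by rintro rfl; exact hac hab, by rintro rfl; exact had hab, hcd.ne,
    hab, hcd, hac, had, hbc, hbd⟩

section

variable {G : Type*} [Group G]

open Subgroup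

theorem IsConj.orderOf_eq {x y : G} (h : IsConj x y) : orderOf x = orderOf y := by
  obtain ⟨g, rfl⟩ := isConj_iff.1 h
  exact (MulEquiv.orderOf_eq (MulAut.conj g) x).symm

theorem Subgroup.closure_pair_mul_comm_iff {x y : G} :
    (∀ u ∈ closure {x, y}, ∀ v ∈ closure {x, y}, u * v = v * u) ↔ Commute x y := by
  refine ⟨fun h => h x (subset_closure (by simp)) y (subset_closure (by simp)), fun h => ?_⟩
  have : IsMulCommutative (closure {x, y}) := isMulCommutative_closure (by
    rintro u (rfl | rfl) v (rfl | rfl) <;> first | rfl | exact h | exact h.symm)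
  exact isMulCommutative_iff_of_setLike.1 this

theorem exists_mul_eq_of_orderOf_dvd_mul {x : G} {m n : ℕ} (hmn : m.Coprime n)
    (hx : orderOf x ∣ m * n) : ∃ u v : G, u * v = x ∧ orderOf u ∣ m ∧ orderOf v ∣ n := by
  obtain ⟨s, t, hst⟩ := Nat.isCoprime_iff_coprime.2 hmn
  have hx' : x ^ ((m * n : ℕ) : ℤ) = 1 := by rw [zpow_natCast, orderOf_dvd_iff_pow_eq_one.1 hx]
  refine ⟨x ^ (t * n), x ^ (s * m), ?_, ?_, ?_⟩
  · rw [← zpow_add, add_comm, hst, zpow_one]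
  · rw [orderOf_dvd_iff_pow_eq_one, ← zpow_natCast, ← zpow_mul,
      show t * n * m = ((m * n : ℕ) : ℤ) * t by push_cast; ring, zpow_mul, hx', one_zpow]
  · rw [orderOf_dvd_iff_pow_eq_one, ← zpow_natCast, ← zpow_mul,
      show s * m * n = ((m * n : ℕ) : ℤ) * s by push_cast; ring, zpow_mul, hx', one_zpow]

theorem IsOfFinOrder.exists_mul_eq_coprime_mul_primePow {x : G} (hx : IsOfFinOrder x) {q : ℕ}
    (hq : q.Prime) : ∃ u v : G, u * v = x ∧ (orderOf u).Coprime q ∧ ∃ e, orderOf v ∣ q ^ e := by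
  have hcompl := Nat.coprime_ordCompl hq hx.orderOf_pos.ne'
  obtain ⟨u, v, huv, hu, hv⟩ := exists_mul_eq_of_orderOf_dvd_mul (hcompl.pow_left _).symm
    (by rw [mul_comm, Nat.ordProj_mul_ordCompl_eq_self])
  exact ⟨u, v, huv, hcompl.symm.coprime_dvd_left hu, _, hv⟩

theorem Commute.exists_pow_mul_eq_left {x z : G} (h : Commute x z)
    (hco : (orderOf x).Coprime (orderOf z)) : ∃ n : ℕ, (x * z) ^ n = x := by
  obtain ⟨n, hx, hz⟩ := Nat.chineseRemainder hco 1 0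
  refine ⟨n, ?_⟩
  rw [h.mul_pow, (pow_eq_pow_iff_modEq.2 hx).trans (pow_one x),
    orderOf_dvd_iff_pow_eq_one.1 (Nat.modEq_zero_iff_dvd.1 hz), mul_one]

theorem Commute.not_isConj_mul {x z : G} (h : Commute x z)
    (hco : (orderOf x).Coprime (orderOf z)) (hz : z ≠ 1) : ¬IsConj x (x * z) := by
  intro hconj
  have horder := hconj.orderOf_eq
  rw [h.orderOf_mul_eq_mul_orderOf_of_coprime hco] at horder
  apply hz
  rw [← orderOf_eq_one_iff]
  rcases Nat.eq_zero_or_pos (orderOf x) with h0 | hpos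
  · rwa [h0, Nat.coprime_zero_left] at hco
  · exact (Nat.mul_eq_left hpos.ne').1 horder.symm

def ConjCommute (x y : G) : Prop :=
  ∃ x' y' : G, IsConj x x' ∧ IsConj y y' ∧ Commute x' y'

namespace ConjCommute

variable {x y : G}

theorem of_commute (h : Commute x y) : ConjCommute x y :=
  ⟨x, y, .refl x, .refl y, h⟩

theorem pow (h : ConjCommute x y) (m n : ℕ) : ConjCommute (x ^ m) (y ^ n) := by
  obtain ⟨x', y', hx, hy, hxy⟩ := h
  exact ⟨x' ^ m, y' ^ n, hx.pow m, hy.pow n, hxy.pow_pow m n⟩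

theorem iff_exists_commute_conj : ConjCommute x y ↔ ∃ g : G, Commute x (g * y * g⁻¹) := by
  refine ⟨?_, fun ⟨g, h⟩ => ⟨x, _, .refl x, isConj_iff.2 ⟨g, rfl⟩, h⟩⟩
  rintro ⟨_, _, hx, hy, hxy⟩
  obtain ⟨c, rfl⟩ := isConj_iff.1 hx
  obtain ⟨d, rfl⟩ := isConj_iff.1 hy
  refine ⟨c⁻¹ * d, ?_⟩
  simpa [MulAut.conj_apply, mul_assoc] using hxy.map (MulAut.conj c⁻¹)

theorem of_mem_center_left (hx : x ∈ center G) : ConjCommute x y :=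
  of_commute (mem_center_iff.1 hx y).symm

theorem of_mem_center_right (hy : y ∈ center G) : ConjCommute x y :=
  of_commute (mem_center_iff.1 hy x)

end ConjCommute

def NCClass.mk (x : G) (hx : x ∉ center G) : NCClass G :=
  ⟨ConjClasses.mk x, x, rfl, hx⟩

theorem cccGraph_adj_mk_iff {x y : G} (hx : x ∉ center G) (hy : y ∉ center G) :
    (cccGraph G).Adj (.mk x hx) (.mk y hy) ↔ ¬IsConj x y ∧ ConjCommute x y := by
  simp only [cccGraph, classGraph, NCClass.mk, NCClass, ne_eq, Subtype.mk.injEq,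
    ConjClasses.mk_eq_mk_iff_isConj, closure_pair_mul_comm_iff, ConjCommute, isConj_comm]

theorem has2K2_cccGraph_of_not_conjCommute {a b z : G} (hab : ¬ConjCommute a b)
    (haz : Commute a z) (hbz : Commute b z) (ha : (orderOf a).Coprime (orderOf z))
    (hb : (orderOf b).Coprime (orderOf z)) (hz : z ≠ 1) : Has2K2 (cccGraph G) := by
  obtain ⟨m, hm⟩ := haz.exists_pow_mul_eq_left ha
  obtain ⟨n, hn⟩ := hbz.exists_pow_mul_eq_left hb
  have habz : ¬ConjCommute a (b * z) := fun h => hab (by simpa [hn] using h.pow 1 n)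
  have hazb : ¬ConjCommute (a * z) b := fun h => hab (by simpa [hm] using h.pow m 1)
  have hazbz : ¬ConjCommute (a * z) (b * z) := fun h => hab (hm ▸ hn ▸ h.pow m n)
  have hac : a ∉ center G := fun h => hab (.of_mem_center_left h)
  have hazc : a * z ∉ center G := fun h => hazb (.of_mem_center_left h)
  have hbc : b ∉ center G := fun h => hab (.of_mem_center_right h)
  have hbzc : b * z ∉ center G := fun h => habz (.of_mem_center_right h)
  refine has2K2_of_adj (a := .mk a hac) (b := .mk (a * z) hazc) (c := .mk b hbc)
    (d := .mk (b * z) hbzc) ?_ ?_ ?_ ?_ ?_ ?_ <;> rw [cccGraph_adj_mk_iff]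
  exacts [⟨haz.not_isConj_mul ha hz, .of_commute ((Commute.refl a).mul_right haz)⟩,
    ⟨hbz.not_isConj_mul hb hz, .of_commute ((Commute.refl b).mul_right hbz)⟩,
    (hab ·.2), (habz ·.2), (hazb ·.2), (hazbz ·.2)]

/-- **Jordan's lemma**: the action of `G` on `G ⧸ H` is transitive with at least two points, so by
Burnside's lemma its elements fix one point on average, and some element fixes none. -/
theorem Subgroup.exists_forall_conj_notMem [Finite G] {H : Subgroup G} (hH : H ≠ ⊤) :
    ∃ g : G, ∀ x : G, x * g * x⁻¹ ∉ H := by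
  classical
  have := Fintype.ofFinite G
  by_contra! hfix
  have horbits : Fintype.card (MulAction.orbitRel.Quotient G (G ⧸ H)) ≤ 1 :=
    Fintype.card_le_one_iff_subsingleton.2 <|
      (MulAction.pretransitive_iff_subsingleton_quotient G (G ⧸ H)).1 inferInstance
  have hfixed (g : G) : 1 ≤ Fintype.card (MulAction.fixedBy (G ⧸ H) g) := by
    obtain ⟨x, hx⟩ := hfix g
    refine Fintype.card_pos_iff.2 ⟨⟨(x⁻¹ : G), ?_⟩⟩
    rw [MulAction.mem_fixedBy, MulAction.Quotient.smul_coe, QuotientGroup.eq, ← inv_mem_iff]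
    simpa [mul_assoc] using hx
  have hone : 1 < Fintype.card (MulAction.fixedBy (G ⧸ H) (1 : G)) := by
    simp only [Fintype.card_eq_nat_card, MulAction.fixedBy_one_eq_univ, Nat.card_univ]
    exact one_lt_index_of_ne_top hH
  refine lt_irrefl (Fintype.card G) ?_
  calc Fintype.card G = ∑ _ : G, 1 := by simp
    _ < ∑ g : G, Fintype.card (MulAction.fixedBy (G ⧸ H) g) :=
      Finset.sum_lt_sum (fun g _ => hfixed g) ⟨1, Finset.mem_univ _, hone⟩
    _ = Fintype.card (MulAction.orbitRel.Quotient G (G ⧸ H)) * Fintype.card G :=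
      MulAction.sum_card_fixedBy_eq_card_orbits_mul_card_group G (G ⧸ H)
    _ ≤ 1 * Fintype.card G := Nat.mul_le_mul_right _ horbits
    _ = Fintype.card G := one_mul _

theorem exists_notMem_center_orderOf_coprime [Finite G] {p q : ℕ} (hp : p.Prime) (hq : q.Prime)
    (hpq : p ≠ q) {x : G} (hx : x ∉ center G) :
    ∃ a ∉ center G, (orderOf a).Coprime p ∨ (orderOf a).Coprime q := by
  obtain ⟨u, v, rfl, hu, e, hv⟩ :=
    (isOfFinOrder_of_finite x).exists_mul_eq_coprime_mul_primePow hq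
  by_cases hu' : u ∈ center G
  · refine ⟨v, fun hv' => hx (mul_mem hu' hv'), .inl ?_⟩
    exact ((Nat.coprime_primes hq hp).2 hpq.symm |>.pow_left e).coprime_dvd_left hv
  · exact ⟨u, hu', .inr hu⟩

variable [Finite G] [Group.IsNilpotent G]

-- `G` is the direct product of its Sylow subgroups, in each of which `x` or `y` is trivial.
theorem Commute.of_coprime_orderOf {x y : G} (h : (orderOf x).Coprime (orderOf y)) :
    Commute x y := by
  obtain ⟨e⟩ := (Group.isNilpotent_of_finite_tfae (G := G)).out 0 4 |>.mp ‹_›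
  suffices Commute (e.symm x) (e.symm y) by simpa using this.map e
  refine Pi.commute_iff.2 fun p => Pi.commute_iff.2 fun P => ?_
  have : Fact (p : ℕ).Prime := ⟨Nat.prime_of_mem_primeFactors p.2⟩
  let π : G →* P := (Pi.evalMonoidHom _ P).comp ((Pi.evalMonoidHom _ p).comp e.symm.toMonoidHom)
  show Commute (π x) (π y)
  have hco : (orderOf (π x)).Coprime (orderOf (π y)) :=
    (h.coprime_dvd_left (orderOf_map_dvd π x)).coprime_dvd_right (orderOf_map_dvd π y)
  obtain ⟨i, hi⟩ := IsPGroup.iff_orderOf.1 P.isPGroup' (π x)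
  obtain ⟨j, hj⟩ := IsPGroup.iff_orderOf.1 P.isPGroup' (π y)
  rcases le_total i j with hij | hij
  · rw [orderOf_eq_one_iff.1 <| hco.eq_one_of_dvd (hi ▸ hj ▸ pow_dvd_pow _ hij)]
    exact Commute.one_left _
  · rw [orderOf_eq_one_iff.1 <| hco.symm.eq_one_of_dvd (hj ▸ hi ▸ pow_dvd_pow _ hij)]
    exact Commute.one_right _

theorem exists_not_conjCommute_orderOf_coprime {a : G} (ha : a ∉ center G) {q : ℕ}
    (hq : q.Prime) (haq : (orderOf a).Coprime q) :
    ∃ b : G, ¬ConjCommute a b ∧ (orderOf b).Coprime q := by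
  have hcent : centralizer {a} ≠ ⊤ := by
    rwa [Ne, centralizer_eq_top_iff_subset, Set.singleton_subset_iff]
  obtain ⟨b₀, hb₀⟩ := exists_forall_conj_notMem hcent
  obtain ⟨b, w, rfl, hbq, e, hw⟩ :=
    (isOfFinOrder_of_finite b₀).exists_mul_eq_coprime_mul_primePow hq
  refine ⟨b, fun hab => ?_, hbq⟩
  obtain ⟨g, hg⟩ := ConjCommute.iff_exists_commute_conj.1 hab
  have hgw : Commute a (g * w * g⁻¹) := .of_coprime_orderOf <| by
    rw [← (isConj_iff.2 ⟨g, rfl⟩).orderOf_eq]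
    exact (haq.pow_right e).coprime_dvd_right hw
  refine hb₀ g (mem_centralizer_singleton_iff.2 ?_)
  rw [show g * (b * w) * g⁻¹ = g * b * g⁻¹ * (g * w * g⁻¹) by group]
  exact (hg.mul_right hgw).symm

theorem has2K2_cccGraph_of_orderOf_coprime {q : ℕ} (hq : q.Prime) (hqG : q ∣ Nat.card G) {a : G}
    (ha : a ∉ center G) (haq : (orderOf a).Coprime q) : Has2K2 (cccGraph G) := by
  have : Fact q.Prime := ⟨hq⟩
  obtain ⟨z, hz⟩ := exists_prime_orderOf_dvd_card' q hqG
  obtain ⟨b, hab, hbq⟩ := exists_not_conjCommute_orderOf_coprime ha hq haq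
  rw [← hz] at haq hbq
  exact has2K2_cccGraph_of_not_conjCommute hab (.of_coprime_orderOf haq) (.of_coprime_orderOf hbq)
    haq hbq fun h => hq.ne_one (by rw [← hz, h, orderOf_one])

end

theorem nilpotent_ccc_2K2_free_iff_abelian (G : Type*) [Group G] [Finite G]
    (hnil : Group.IsNilpotent G)
    (h2 : ∃ p q : ℕ, p.Prime ∧ q.Prime ∧ p ≠ q ∧ p ∣ Nat.card G ∧ q ∣ Nat.card G) :
    ¬ Has2K2 (cccGraph G) ↔ ∀ a b : G, a * b = b * a := by
  refine ⟨fun hfree => ?_, fun hcomm => ?_⟩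
  · by_contra! ⟨x, y, hxy⟩
    obtain ⟨p, q, hp, hq, hpq, hpG, hqG⟩ := h2
    have hx : x ∉ Subgroup.center G := fun hx => hxy (Subgroup.mem_center_iff.1 hx y).symm
    obtain ⟨a, ha, hap | haq⟩ := exists_notMem_center_orderOf_coprime hp hq hpq hx
    exacts [hfree (has2K2_cccGraph_of_orderOf_coprime hp hpG ha hap),
      hfree (has2K2_cccGraph_of_orderOf_coprime hq hqG ha haq)]
  · rintro ⟨⟨-, x, -, hx⟩, -⟩
    exact hx (Subgroup.mem_center_iff.2 fun g => hcomm g x)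
end

section
/- Let T_{4n} be the dicyclic group of order 4n with n ≥ 2. Then Γ_CCC(T_{4n}) is always a cograph and a chordal graph; moreover, if n is odd (and n ≥ 3), then Γ_CCC(T_{4n}) contains an induced 2K_2, so it is neither a split graph nor a threshold graph. -/
/-! In Mathlib's `QuaternionGroup n` the rotations `a i` are the powers `xⁱ`, and the `xa j` are
the elements outside `⟨x⟩`. A non-central rotation commutes with no `xa j`, all rotations commute
with each other, and the `xa j` fall into just two conjugacy classes (`j` even or odd). Hence
adjacency in `Γ_CCC(T₄ₙ)` is transitive: the graph is a disjoint union of cliques, so it has no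
induced `P₄` and no induced cycle of length `≥ 4`. For odd `n`, `xa 0` commutes with `xa n`, which
is conjugate to `xa 1`; with the classes of `a 1` and `a 2` this gives an induced `2K₂`. -/

theorem ZMod.natCast_ne_zero_of_lt {k m : ℕ} (hk : 0 < k) (hkm : k < m) : (k : ZMod m) ≠ 0 := by
  rw [Ne, ZMod.natCast_eq_zero_iff]
  exact Nat.not_dvd_of_pos_of_lt hk hkm

theorem ZMod.natCast_add_self_eq_zero (n : ℕ) : (n : ZMod (2 * n)) + n = 0 := by
  have h := ZMod.natCast_self (2 * n)
  push_cast at h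
  linear_combination h

section AdjTransitive

variable {V : Type*}

/-- Equivalently, `Γ` is a disjoint union of cliques. -/
def SimpleGraph.IsAdjTransitive (Γ : SimpleGraph V) : Prop :=
  ∀ ⦃u v w : V⦄, Γ.Adj u v → Γ.Adj v w → u ≠ w → Γ.Adj u w

variable {Γ : SimpleGraph V}

theorem SimpleGraph.IsAdjTransitive.isCograph (hΓ : Γ.IsAdjTransitive) : IsCograph Γ :=
  fun ⟨_, _, _, _, _, hac, _, _, _, _, hab, hbc, _, hnac, _, _⟩ => hnac (hΓ hab hbc hac)

theorem SimpleGraph.IsAdjTransitive.isChordal (hΓ : Γ.IsAdjTransitive) : IsChordal Γ := by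
  rintro m hm ⟨f, hf, hadj⟩
  have h1 := ZMod.natCast_ne_zero_of_lt (m := m) one_pos (by omega)
  have h2 := ZMod.natCast_ne_zero_of_lt (m := m) two_pos (by omega)
  have h3 := ZMod.natCast_ne_zero_of_lt (m := m) three_pos (by omega)
  push_cast at h1 h2 h3
  have h01 : Γ.Adj (f 0) (f 1) := (hadj 0 1).mpr (.inl (zero_add 1).symm)
  have h12 : Γ.Adj (f 1) (f 2) := (hadj 1 2).mpr (.inl one_add_one_eq_two.symm)
  have h02 : f 0 ≠ f 2 := fun h => h2 (hf h).symm
  rcases (hadj 0 2).mp (hΓ h01 h12 h02) with h | h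
  · exact h1 (by linear_combination h)
  · exact h3 (by linear_combination -h)

end AdjTransitive

theorem Has2K2.not_isSplit {V : Type*} {Γ : SimpleGraph V} (h : Has2K2 Γ) : ¬IsSplit Γ :=
  fun hΓ => hΓ.2.2 h

theorem Has2K2.not_isThreshold {V : Type*} {Γ : SimpleGraph V} (h : Has2K2 Γ) : ¬IsThreshold Γ :=
  fun hΓ => hΓ.2.2.2 h

namespace NCClass

variable {G : Type*} [Group G]

def of (g : G) (hg : g ∉ Subgroup.center G) : NCClass G :=
  ⟨ConjClasses.mk g, g, rfl, hg⟩

theorem of_eq_of_iff {g h : G} {hg : g ∉ Subgroup.center G} {hh : h ∉ Subgroup.center G} :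
    of g hg = of h hh ↔ IsConj g h :=
  Subtype.ext_iff.trans ConjClasses.mk_eq_mk_iff_isConj

theorem notMem_center_of_mk_eq (c : NCClass G) {g : G} (hg : ConjClasses.mk g = c.1) :
    g ∉ Subgroup.center G := by
  obtain ⟨x, hx, hxc⟩ := c.2
  intro hgc
  have hconj : IsConj g x := ConjClasses.mk_eq_mk_iff_isConj.mp (hg.trans hx.symm)
  exact hxc (hconj.eq_of_left_mem_center hgc ▸ hgc)

end NCClass

theorem cccGraph_adj_iff {G : Type*} [Group G] {c d : NCClass G} :
    (cccGraph G).Adj c d ↔ c ≠ d ∧ ∃ g h : G, ConjClasses.mk g = c.1 ∧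
      ConjClasses.mk h = d.1 ∧ Commute g h := by
  refine and_congr_right fun _ => exists₂_congr fun g h => and_congr_right fun _ =>
    and_congr_right fun _ => ⟨fun hP => hP g ?_ h ?_, fun hgh => ?_⟩
  · exact Subgroup.subset_closure (Set.mem_insert g {h})
  · exact Subgroup.subset_closure (Set.mem_insert_of_mem g rfl)
  · have hpair : ∀ x ∈ ({g, h} : Set G), ∀ y ∈ ({g, h} : Set G), x * y = y * x := by
      rintro x (rfl | rfl) y (rfl | rfl)
      exacts [rfl, hgh, hgh.symm, rfl]
    exact fun x hx y hy => Set.centralizer_centralizer_comm_of_comm hpair x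
      (Subgroup.closure_le_centralizer_centralizer _ hx) y
      (Subgroup.closure_le_centralizer_centralizer _ hy)

namespace QuaternionGroup

variable {n : ℕ}

@[simp]
theorem inv_a (i : ZMod (2 * n)) : (a i)⁻¹ = a (-i) := rfl

@[simp]
theorem inv_xa (i : ZMod (2 * n)) : (xa i)⁻¹ = xa ((n : ZMod (2 * n)) + i) := rfl

def IsRotation (g : QuaternionGroup n) : Prop := ∃ i, g = a i

@[simp]
theorem isRotation_a (i : ZMod (2 * n)) : IsRotation (a i) := ⟨i, rfl⟩

@[simp]
theorem not_isRotation_xa (i : ZMod (2 * n)) : ¬IsRotation (xa i) := fun ⟨_, h⟩ => nomatch h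

theorem commute_a_a (i j : ZMod (2 * n)) : Commute (a i) (a j) := by
  rw [Commute, SemiconjBy, a_mul_a, a_mul_a, add_comm]

theorem commute_a_xa_iff {i j : ZMod (2 * n)} : Commute (a i) (xa j) ↔ i + i = 0 := by
  rw [Commute, SemiconjBy, a_mul_xa, xa_mul_a, xa.injEq]
  constructor <;> intro h <;> linear_combination -h

theorem commute_xa_zero_xa_n : Commute (xa 0) (xa (n : ZMod (2 * n))) := by
  rw [Commute, SemiconjBy, xa_mul_xa, xa_mul_xa, a.injEq]
  linear_combination ZMod.natCast_add_self_eq_zero n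

theorem a_mem_center_iff {i : ZMod (2 * n)} :
    a i ∈ Subgroup.center (QuaternionGroup n) ↔ i + i = 0 := by
  refine ⟨fun h => commute_a_xa_iff.mp (Subgroup.mem_center_iff.mp h (xa 0)).symm, fun h => ?_⟩
  refine Subgroup.mem_center_iff.mpr fun g => ?_
  rcases g with j | j
  exacts [(commute_a_a i j).symm.eq, (commute_a_xa_iff.mpr h).symm.eq]

theorem xa_notMem_center (hn : 2 ≤ n) (j : ZMod (2 * n)) :
    xa j ∉ Subgroup.center (QuaternionGroup n) := fun h => by
  have h2 := ZMod.natCast_ne_zero_of_lt (m := 2 * n) two_pos (by omega)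
  push_cast at h2
  exact h2 (by linear_combination commute_a_xa_iff.mp (Subgroup.mem_center_iff.mp h (a 1)))

theorem isRotation_iff_of_isConj {g h : QuaternionGroup n} (hgh : IsConj g h) :
    IsRotation g ↔ IsRotation h := by
  obtain ⟨c, rfl⟩ := isConj_iff.mp hgh
  rcases c with i | i <;> rcases g with j | j <;> simp

theorem isRotation_iff_of_commute {g h : QuaternionGroup n} (hgh : Commute g h)
    (hg : g ∉ Subgroup.center _) (hh : h ∉ Subgroup.center _) : IsRotation g ↔ IsRotation h := by
  rcases g with i | i <;> rcases h with j | j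
  · simp
  · exact absurd (a_mem_center_iff.mpr (commute_a_xa_iff.mp hgh)) hg
  · exact absurd (a_mem_center_iff.mpr (commute_a_xa_iff.mp hgh.symm)) hh
  · simp

theorem eq_a_or_eq_a_neg_of_isConj {g : QuaternionGroup n} {j : ZMod (2 * n)}
    (h : IsConj (a j) g) : g = a j ∨ g = a (-j) := by
  obtain ⟨c, rfl⟩ := isConj_iff.mp h
  rcases c with i | i
  · left; simp
  · right
    simp only [xa_mul_a, xa_mul_xa, inv_xa, a.injEq]
    linear_combination ZMod.natCast_add_self_eq_zero n

def parity (n : ℕ) : ZMod (2 * n) →+* ZMod 2 := ZMod.castHom (dvd_mul_right 2 n) (ZMod 2)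

theorem parity_eq_of_isConj {j k : ZMod (2 * n)} (h : IsConj (xa j) (xa k)) :
    parity n j = parity n k := by
  have hself : ∀ x : ZMod 2, x + x = 0 := by decide
  have hneg : ∀ x : ZMod 2, -x = x := by decide
  obtain ⟨c, hc⟩ := isConj_iff.mp h
  rcases c with i | i
  · simp only [a_mul_xa, xa_mul_a, inv_a, xa.injEq] at hc
    rw [← hc, show j - i + -i = j - (i + i) by ring, map_sub, map_add, hself, sub_zero]
  · simp only [xa_mul_xa, a_mul_xa, inv_xa, xa.injEq] at hc
    rw [← hc, show (n : ZMod (2 * n)) + i - (n + j - i) = i + i - j by ring, map_sub, map_add,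
      hself, zero_sub, hneg]

theorem isConj_xa_of_eq_add {j k m : ZMod (2 * n)} (h : j = k + 2 * m) :
    IsConj (xa j) (xa k) :=
  isConj_iff.mpr ⟨a m, by simp only [a_mul_xa, xa_mul_a, inv_a, xa.injEq]; linear_combination h⟩

theorem mk_eq_mk_xa_zero_or_mk_xa_one {g : QuaternionGroup n} (hg : ¬IsRotation g) :
    ConjClasses.mk g = ConjClasses.mk (xa 0) ∨ ConjClasses.mk g = ConjClasses.mk (xa 1) := by
  rcases g with i | j
  · exact absurd (isRotation_a i) hg
  simp only [ConjClasses.mk_eq_mk_iff_isConj]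
  obtain ⟨t, rfl⟩ := ZMod.intCast_surjective j
  rcases Int.even_or_odd' t with ⟨m, rfl | rfl⟩
  · exact .inl (isConj_xa_of_eq_add (m := m) (by push_cast; ring))
  · exact .inr (isConj_xa_of_eq_add (m := m) (by push_cast; ring))

theorem cccGraph_isAdjTransitive : (cccGraph (QuaternionGroup n)).IsAdjTransitive := by
  intro c d e hcd hde hce
  rw [cccGraph_adj_iff] at hcd hde ⊢
  obtain ⟨hcd, g₁, g₂, hg₁, hg₂, hg⟩ := hcd
  obtain ⟨hde, k₁, k₂, hk₁, hk₂, hk⟩ := hde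
  refine ⟨hce, g₁, k₂, hg₁, hk₂, ?_⟩
  have hgk : IsConj g₂ k₁ := ConjClasses.mk_eq_mk_iff_isConj.mp (hg₂.trans hk₁.symm)
  have hg₁r := isRotation_iff_of_commute hg (c.notMem_center_of_mk_eq hg₁)
    (d.notMem_center_of_mk_eq hg₂)
  have hk₂r := isRotation_iff_of_commute hk (d.notMem_center_of_mk_eq hk₁)
    (e.notMem_center_of_mk_eq hk₂)
  have hgk₁r := isRotation_iff_of_isConj hgk
  by_cases hr : IsRotation g₂
  · obtain ⟨i, rfl⟩ := hg₁r.mpr hr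
    obtain ⟨j, rfl⟩ := hk₂r.mp (hgk₁r.mp hr)
    exact commute_a_a i j
  · have hc := mk_eq_mk_xa_zero_or_mk_xa_one (mt hg₁r.mp hr)
    have hd := mk_eq_mk_xa_zero_or_mk_xa_one hr
    have he := mk_eq_mk_xa_zero_or_mk_xa_one fun h => hr (hgk₁r.mpr (hk₂r.mpr h))
    rw [hg₁] at hc
    rw [hg₂] at hd
    rw [hk₂] at he
    replace hcd : c.1 ≠ d.1 := fun h => hcd (Subtype.ext h)
    replace hde : d.1 ≠ e.1 := fun h => hde (Subtype.ext h)
    replace hce : c.1 ≠ e.1 := fun h => hce (Subtype.ext h)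
    rcases hc with hc | hc <;> rcases hd with hd | hd <;> rcases he with he | he <;>
      simp only [hc, hd, he, ne_eq, not_true_eq_false] at hcd hde hce

theorem cccGraph_not_adj_of_isRotation {c d : NCClass (QuaternionGroup n)}
    {g h : QuaternionGroup n} (hg : ConjClasses.mk g = c.1) (hh : ConjClasses.mk h = d.1)
    (hgr : IsRotation g) (hhr : ¬IsRotation h) : ¬(cccGraph (QuaternionGroup n)).Adj c d := by
  rw [cccGraph_adj_iff]
  rintro ⟨-, g', h', hg', hh', hc⟩
  have hgg' : IsConj g g' := ConjClasses.mk_eq_mk_iff_isConj.mp (hg.trans hg'.symm)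
  have hhh' : IsConj h h' := ConjClasses.mk_eq_mk_iff_isConj.mp (hh.trans hh'.symm)
  have hr := isRotation_iff_of_commute hc (c.notMem_center_of_mk_eq hg')
    (d.notMem_center_of_mk_eq hh')
  exact hhr ((isRotation_iff_of_isConj hhh').mpr (hr.mp ((isRotation_iff_of_isConj hgg').mp hgr)))

theorem ncClass_of_a_ne_of_xa {i j : ZMod (2 * n)} (hi : a i ∉ Subgroup.center _)
    (hj : xa j ∉ Subgroup.center _) : NCClass.of (a i) hi ≠ NCClass.of (xa j) hj := fun h =>
  not_isRotation_xa j ((isRotation_iff_of_isConj (NCClass.of_eq_of_iff.mp h)).mp (isRotation_a i))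

theorem has2K2_cccGraph (hn : 3 ≤ n) (hodd : Odd n) : Has2K2 (cccGraph (QuaternionGroup n)) := by
  have h1 := ZMod.natCast_ne_zero_of_lt (m := 2 * n) one_pos (by omega)
  have h2 := ZMod.natCast_ne_zero_of_lt (m := 2 * n) two_pos (by omega)
  have h3 := ZMod.natCast_ne_zero_of_lt (m := 2 * n) three_pos (by omega)
  have h4 := ZMod.natCast_ne_zero_of_lt (m := 2 * n) four_pos (by omega)
  push_cast at h1 h2 h3 h4
  have ha₁ : a (1 : ZMod (2 * n)) ∉ Subgroup.center _ :=
    fun h => h2 (by linear_combination a_mem_center_iff.mp h)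
  have ha₂ : a (2 : ZMod (2 * n)) ∉ Subgroup.center _ :=
    fun h => h4 (by linear_combination a_mem_center_iff.mp h)
  have hxa := xa_notMem_center (n := n) (by omega)
  have hne₁₂ : NCClass.of _ ha₁ ≠ NCClass.of _ ha₂ := fun h => by
    rcases eq_a_or_eq_a_neg_of_isConj (NCClass.of_eq_of_iff.mp h) with h' | h' <;>
      rw [a.injEq] at h'
    · exact h1 (by linear_combination h')
    · exact h3 (by linear_combination h')
  have hne₃₄ : NCClass.of _ (hxa 0) ≠ NCClass.of _ (hxa 1) := fun h => by
    simpa using parity_eq_of_isConj (NCClass.of_eq_of_iff.mp h)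
  obtain ⟨m, hm⟩ := hodd
  have hconj : IsConj (xa (n : ZMod (2 * n))) (xa 1) :=
    isConj_xa_of_eq_add (m := m) (by rw [hm]; push_cast; ring)
  refine ⟨.of _ ha₁, .of _ ha₂, .of _ (hxa 0), .of _ (hxa 1), hne₁₂, ncClass_of_a_ne_of_xa _ _,
    ncClass_of_a_ne_of_xa _ _, ncClass_of_a_ne_of_xa _ _, ncClass_of_a_ne_of_xa _ _, hne₃₄,
    ?_, ?_, ?_, ?_, ?_, ?_⟩
  · exact cccGraph_adj_iff.mpr ⟨hne₁₂, _, _, rfl, rfl, commute_a_a 1 2⟩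
  · exact cccGraph_adj_iff.mpr ⟨hne₃₄, _, _, rfl, ConjClasses.mk_eq_mk_iff_isConj.mpr hconj,
      commute_xa_zero_xa_n⟩
  all_goals exact cccGraph_not_adj_of_isRotation rfl rfl (isRotation_a _) (not_isRotation_xa _)

end QuaternionGroup

theorem ccc_dicyclic (n : ℕ) (hn : 2 ≤ n) :
    IsCograph (cccGraph (QuaternionGroup n)) ∧ IsChordal (cccGraph (QuaternionGroup n)) ∧
    (Odd n → Has2K2 (cccGraph (QuaternionGroup n)) ∧
      ¬ IsSplit (cccGraph (QuaternionGroup n)) ∧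
      ¬ IsThreshold (cccGraph (QuaternionGroup n))) := by
  have htrans := QuaternionGroup.cccGraph_isAdjTransitive (n := n)
  refine ⟨htrans.isCograph, htrans.isChordal, fun hodd => ?_⟩
  have h2K2 := QuaternionGroup.has2K2_cccGraph (by obtain ⟨m, rfl⟩ := hodd; omega) hodd
  exact ⟨h2K2, h2K2.not_isSplit, h2K2.not_isThreshold⟩
end
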